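/- Let H be a complex Hilbert space and B a bounded self-adjoint operator on H with operator norm ‖B‖ < 1/9. Let A = exp(i • B) (operator exponential), and let K be a closed subspace of H such that A maps K into K and the adjoint A† maps K into K. Then B maps K into K. -/

import Mathlib

/-!
Since `‖B‖ < π`, the spectrum of `B` lies in `(-π, π)`, where `t ↦ exp (i t)` is inverted by the
principal branch `w ↦ -i log w`, which is continuous on the spectrum of `A` (it avoids the
negative real axis). By the continuous functional calculus `B = -i log A`, so `B` lies in the
closed ⋆-algebra generated by `A`. The operators `T` with `T K ⊆ K` and `T† K ⊆ K` form a closed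
⋆-subalgebra containing `A`, hence also `B`.
-/

open Complex ContinuousLinearMap
open scoped Real

namespace Submodule

variable {𝕜 E : Type*} [RCLike 𝕜] [NormedAddCommGroup E] [InnerProductSpace 𝕜 E] [CompleteSpace E]

/-- For closed `K`, `T† K ⊆ K` is equivalent to `T Kᗮ ⊆ Kᗮ`: these are the operators reduced
by `K`. -/
def reducingStarSubalgebra (K : Submodule 𝕜 E) : StarSubalgebra 𝕜 (E →L[𝕜] E) where
  carrier := {T | Set.MapsTo T K K ∧ Set.MapsTo (adjoint T) K K}
  mul_mem' {S T} hS hT :=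
    ⟨hS.1.comp hT.1, by rw [ContinuousLinearMap.mul_def, adjoint_comp]; exact hT.2.comp hS.2⟩
  add_mem' {S T} hS hT :=
    ⟨fun x hx => K.add_mem (hS.1 hx) (hT.1 hx), by
      rw [map_add]; exact fun x hx => K.add_mem (hS.2 hx) (hT.2 hx)⟩
  algebraMap_mem' c := by
    refine ⟨fun x hx => K.smul_mem c hx, ?_⟩
    rw [← star_eq_adjoint, ← algebraMap_star_comm]
    exact fun x hx => K.smul_mem _ hx
  star_mem' {T} hT := ⟨hT.2, by rw [star_eq_adjoint, adjoint_adjoint]; exact hT.1⟩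

theorem isClosed_reducingStarSubalgebra {K : Submodule 𝕜 E} (hK : IsClosed (K : Set E)) :
    IsClosed (K.reducingStarSubalgebra : Set (E →L[𝕜] E)) := by
  have hMapsTo : IsClosed {T : E →L[𝕜] E | Set.MapsTo T K K} :=
    hK.setOfPred_mapsTo fun x _ => continuous_eval_const x
  exact hMapsTo.inter (hMapsTo.preimage adjoint.continuous)

end Submodule

namespace Complex

theorem exp_mem_slitPlane_of_mem_Ioo {z : ℂ} (hz : z.im ∈ Set.Ioo (-π) π) : cexp z ∈ slitPlane :=
  expOpenPartialHomeomorph.map_source hz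

theorem neg_I_mul_log_exp_I_mul {z : ℂ} (h₁ : -π < z.re) (h₂ : z.re ≤ π) :
    -I * log (cexp (I * z)) = z := by
  rw [log_exp (by simpa using h₁) (by simpa using h₂), ← mul_assoc, neg_mul, I_mul_I, neg_neg,
    one_mul]

end Complex

namespace IsSelfAdjoint

variable {𝔸 : Type*} [CStarAlgebra 𝔸] {b : 𝔸}

theorem exp_I_smul_eq_cfc (hb : IsSelfAdjoint b) :
    NormedSpace.exp (I • b) = cfc (fun z => cexp (I * z)) b := by
  have : IsStarNormal (I • b) :=
    skewAdjoint.isStarNormal_of_mem (I_smul_mem_skewAdjoint_iff_isSelfAdjoint.mpr hb)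
  rw [cfc_comp_const_mul I cexp b, CFC.complex_exp_eq_normedSpace_exp]

theorem cfc_log_exp_I_smul (hb : IsSelfAdjoint b) (hπ : ‖b‖ < π) :
    cfc (fun w => -I * log w) (NormedSpace.exp (I • b)) = b := by
  nontriviality 𝔸
  have hre : ∀ z ∈ spectrum ℂ b, z.re ∈ Set.Ioo (-π) π := fun z hz =>
    abs_lt.mp ((abs_re_le_norm z).trans_lt ((spectrum.norm_le_norm_of_mem hz).trans_lt hπ))
  have hlog : ContinuousOn (fun w => -I * log w) ((fun z => cexp (I * z)) '' spectrum ℂ b) := by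
    rintro _ ⟨z, hz, rfl⟩
    refine (continuousAt_const.mul (continuousAt_clog ?_)).continuousWithinAt
    exact exp_mem_slitPlane_of_mem_Ioo (by simpa using hre z hz)
  rw [hb.exp_I_smul_eq_cfc, ← cfc_comp' _ _ b hlog]
  conv_rhs => rw [← cfc_id' ℂ b]
  exact cfc_congr fun z hz => neg_I_mul_log_exp_I_mul (hre z hz).1 (hre z hz).2.le

end IsSelfAdjoint

theorem stmt6
    {H : Type*} [NormedAddCommGroup H] [InnerProductSpace ℂ H] [CompleteSpace H]
    (B : H →L[ℂ] H) (hB : IsSelfAdjoint B) (hnorm : ‖B‖ < 1 / 9)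
    (A : H →L[ℂ] H) (hA : A = NormedSpace.exp (Complex.I • B))
    (K : Submodule ℂ H) (hK : IsClosed (K : Set H))
    (hAK : ∀ x ∈ K, A x ∈ K)
    (hAK' : ∀ x ∈ K, ContinuousLinearMap.adjoint A x ∈ K) :
    ∀ x ∈ K, B x ∈ K := by
  have hB_eq : cfc (fun w => -I * log w) A = B :=
    hA ▸ hB.cfc_log_exp_I_smul (hnorm.trans (by linarith [Real.pi_gt_three]))
  have hA_mem : A ∈ K.reducingStarSubalgebra := ⟨fun x hx => hAK x hx, fun x hx => hAK' x hx⟩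
  have hB_mem : B ∈ K.reducingStarSubalgebra :=
    hB_eq ▸ cfc_mem (hs := Submodule.isClosed_reducingStarSubalgebra hK) _ hA_mem
  exact fun x hx => hB_mem.1 hx
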